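/- (Theorem C, algebraic form.) Let k ≥ 1 and let a ∈ ℝ[z₁,z₂] satisfy a(1,1) = 4. Then all formal partial derivatives D^{(n,m)} a with n + m < k vanish at each of the three points (−1,−1), (−1,1), (1,−1) (condition Z_k) if and only if there exist polynomials c_{α,β,γ} ∈ ℝ[z₁,z₂], one for each box spline symbol B#_{α,β,γ} in the set I_k, such that a = Σ_{B#_{α,β,γ} ∈ I_k} c_{α,β,γ} · 4 · B#_{α,β,γ} and Σ c_{α,β,γ}(1,1) = 1. -/

import Mathlib

open MvPolynomial

/-- The normalized three-directional box spline symbol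
`B#_{α,β,γ}(z₁,z₂) = ((1+z₁)/2)^α ((1+z₂)/2)^β ((1+z₁z₂)/2)^γ`. -/
noncomputable def Bs (α β γ : ℕ) : MvPolynomial (Fin 2) ℝ :=
  (C (1 / 2 : ℝ) * (1 + X 0)) ^ α * (C (1 / 2 : ℝ) * (1 + X 1)) ^ β *
    (C (1 / 2 : ℝ) * (1 + X 0 * X 1)) ^ γ

/-- The formal partial derivative `D^{(n,m)} = ∂^{n+m}/∂z₁^n ∂z₂^m`. -/
noncomputable def Dnm (n m : ℕ) : Module.End ℝ (MvPolynomial (Fin 2) ℝ) :=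
  ((pderiv (0 : Fin 2)).toLinearMap ^ n) * ((pderiv (1 : Fin 2)).toLinearMap ^ m)

/-- Triples `(α,β,γ)` indexing the generating set
`I_k = { B#_{β,β,α}, B#_{β,α,β}, B#_{α,β,β} : α = 0,…,⌊k/2⌋, β = k − α }`. -/
def inIk (k : ℕ) (t : ℕ × ℕ × ℕ) : Prop :=
  ∃ α : ℕ, α ≤ k / 2 ∧
    (t = (k - α, k - α, α) ∨ t = (k - α, α, k - α) ∨ t = (α, k - α, k - α))

/-! The zero condition of order `k` at a point `p` says exactly that `a ∈ 𝔪_p ^ k`, where `𝔪_p`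
is the maximal ideal of `p`: translate `p` to the origin and read the derivatives there as
Taylor coefficients. With the directional factors `u = (1+z₁)/2`, `v = (1+z₂)/2`,
`w = (1+z₁z₂)/2`, the maximal ideals of `(-1,-1)`, `(-1,1)`, `(1,-1)` are `(u,v)`, `(u,w)`,
`(v,w)`. These are pairwise comaximal (`u + w - z₁v = 1 = v + w - z₂u`), so the intersection of
their `k`-th powers is their product, which is spanned by the `u^i v^j w^l` with
`i+j, i+l, j+l ≥ k`; each of these is a multiple of some `B#_t = u^t₁ v^t₂ w^t₃` with `t ∈ I_k`,
and every such `B#_t` is one of them. Since every `B#` equals `1` at `(1,1)`, evaluating there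
gives the normalization `Σ c(1,1) = 1`. -/

namespace Ideal

variable {R : Type*} [CommRing R]

theorem span_pair_pow (x y : R) (k : ℕ) :
    span {x, y} ^ k = span {p | ∃ i j, i + j = k ∧ p = x ^ i * y ^ j} := by
  induction k with
  | zero =>
    have : {p | ∃ i j, i + j = 0 ∧ p = x ^ i * y ^ j} = {1} := by
      ext p
      simp only [Set.mem_ofPred_eq, Nat.add_eq_zero_iff, Set.mem_singleton_iff]
      constructor
      · rintro ⟨i, j, ⟨rfl, rfl⟩, rfl⟩
        simp
      · rintro rfl
        exact ⟨0, 0, ⟨rfl, rfl⟩, by simp⟩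
    rw [pow_zero, this, span_singleton_one, one_eq_top]
  | succ k ih =>
    rw [pow_succ, ih, span_mul_span']
    apply le_antisymm <;> rw [span_le]
    · rintro _ ⟨_, ⟨i, j, rfl, rfl⟩, r, hr | hr, rfl⟩ <;> subst hr
      · exact subset_span ⟨i + 1, j, by omega, by ring⟩
      · exact subset_span ⟨i, j + 1, by omega, by ring⟩
    · rintro _ ⟨_ | i, j, hij, rfl⟩
      · exact subset_span ⟨x ^ 0 * y ^ k, ⟨0, k, zero_add k, rfl⟩, y, by simp, by
          rw [show j = k + 1 by omega]; ring⟩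
      · exact subset_span ⟨x ^ i * y ^ j, ⟨i, j, by omega, rfl⟩, x, by simp, by ring⟩

theorem pow_mul_pow_mem_span_pair_pow {x y : R} {i j k : ℕ} (h : k ≤ i + j) :
    x ^ i * y ^ j ∈ span {x, y} ^ k := by
  apply pow_le_pow_right h
  rw [pow_add]
  exact mul_mem_mul (pow_mem_pow (subset_span (by simp)) _)
    (pow_mem_pow (subset_span (by simp)) _)

theorem span_pair_eq_span_pair {a b c d : R}
    (ha : a ∈ span {c, d}) (hb : b ∈ span {c, d})
    (hc : c ∈ span {a, b}) (hd : d ∈ span {a, b}) :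
    span {a, b} = span {c, d} := by
  apply le_antisymm <;> rw [span_le, Set.insert_subset_iff, Set.singleton_subset_iff]
  exacts [⟨ha, hb⟩, ⟨hc, hd⟩]

theorem mem_span_image_finset_iff {ι : Type*} {f : ι → R} {S : Finset ι} {x : R} :
    x ∈ span (f '' S) ↔ ∃ c : ι → R, x = ∑ i ∈ S, c i * f i := by
  constructor
  · intro hx
    obtain ⟨l, hl, rfl⟩ := (Finsupp.mem_span_image_iff_linearCombination R).mp hx
    exact ⟨l, by rw [Finsupp.linearCombination_apply, Finsupp.sum_of_support_subset l hl] <;>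
      simp⟩
  · rintro ⟨c, rfl⟩
    exact sum_mem _ fun i hi => mul_mem_left _ _ (subset_span ⟨i, hi, rfl⟩)

end Ideal

def Ik (k : ℕ) : Finset (ℕ × ℕ × ℕ) :=
  (Finset.range (k / 2 + 1)).biUnion fun α =>
    {(k - α, k - α, α), (k - α, α, k - α), (α, k - α, k - α)}

lemma mem_Ik {k : ℕ} {t : ℕ × ℕ × ℕ} : t ∈ Ik k ↔ inIk k t := by
  simp [Ik, inIk]

lemma coe_Ik (k : ℕ) : (Ik k : Set (ℕ × ℕ × ℕ)) = {t | inIk k t} :=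
  Set.ext fun _ => mem_Ik

lemma le_add_of_inIk {k : ℕ} {t : ℕ × ℕ × ℕ} (ht : inIk k t) :
    k ≤ t.1 + t.2.1 ∧ k ≤ t.1 + t.2.2 ∧ k ≤ t.2.1 + t.2.2 := by
  obtain ⟨α, hα, rfl | rfl | rfl⟩ := ht <;> dsimp only <;> omega

lemma exists_inIk_le {k i j l : ℕ} (hij : k ≤ i + j) (hil : k ≤ i + l) (hjl : k ≤ j + l) :
    ∃ t, inIk k t ∧ t.1 ≤ i ∧ t.2.1 ≤ j ∧ t.2.2 ≤ l := by
  -- put `α = min m (k / 2)` at a smallest coordinate `m`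
  have hα : ∀ m, min m (k / 2) ≤ k / 2 := fun m => min_le_right _ _
  rcases le_total i j with hj | hj <;> rcases le_total i l with hl | hl <;>
    rcases le_total j l with hjl' | hjl'
  all_goals first
    | exact ⟨_, ⟨_, hα i, Or.inr (Or.inr rfl)⟩, by dsimp only; omega⟩
    | exact ⟨_, ⟨_, hα j, Or.inr (Or.inl rfl)⟩, by dsimp only; omega⟩
    | exact ⟨_, ⟨_, hα l, Or.inl rfl⟩, by dsimp only; omega⟩

section TripleMonomial

variable {R : Type*} [CommRing R] (u v w : R)

def tripleMonomial (t : ℕ × ℕ × ℕ) : R := u ^ t.1 * v ^ t.2.1 * w ^ t.2.2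

lemma tripleMonomial_mem_span_of_le {k i j l : ℕ} (hij : k ≤ i + j) (hil : k ≤ i + l)
    (hjl : k ≤ j + l) :
    u ^ i * v ^ j * w ^ l ∈ Ideal.span (tripleMonomial u v w '' {t | inIk k t}) := by
  obtain ⟨t, ht, hi, hj, hl⟩ := exists_inIk_le hij hil hjl
  refine Ideal.mem_of_dvd _ ?_ (Ideal.subset_span ⟨t, ht, rfl⟩)
  exact mul_dvd_mul (mul_dvd_mul (pow_dvd_pow u hi) (pow_dvd_pow v hj)) (pow_dvd_pow w hl)

lemma span_pair_pow_mul_le (k : ℕ) :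
    Ideal.span {u, v} ^ k * Ideal.span {u, w} ^ k * Ideal.span {v, w} ^ k ≤
      Ideal.span (tripleMonomial u v w '' {t | inIk k t}) := by
  simp only [Ideal.span_pair_pow, Ideal.span_mul_span', Ideal.span_le]
  rintro _ ⟨_, ⟨_, ⟨a, a', ha, rfl⟩, _, ⟨b, b', hb, rfl⟩, rfl⟩, _, ⟨c, c', hc, rfl⟩, rfl⟩
  rw [SetLike.mem_coe]
  convert tripleMonomial_mem_span_of_le u v w (k := k) (i := a + b) (j := a' + c) (l := b' + c')
    (by omega) (by omega) (by omega) using 1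
  ring

theorem inf_span_pair_pow_eq_span_tripleMonomial (k : ℕ)
    (huv_uw : IsCoprime (Ideal.span {u, v}) (Ideal.span {u, w}))
    (huv_vw : IsCoprime (Ideal.span {u, v}) (Ideal.span {v, w}))
    (huw_vw : IsCoprime (Ideal.span {u, w}) (Ideal.span {v, w})) :
    Ideal.span {u, v} ^ k ⊓ Ideal.span {u, w} ^ k ⊓ Ideal.span {v, w} ^ k =
      Ideal.span (tripleMonomial u v w '' {t | inIk k t}) := by
  apply le_antisymm
  · rw [← Ideal.mul_eq_inf_of_isCoprime huv_uw.pow,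
      ← Ideal.mul_eq_inf_of_isCoprime (huv_vw.pow.mul_left huw_vw.pow)]
    exact span_pair_pow_mul_le u v w k
  · rw [Ideal.span_le]
    rintro _ ⟨t, ht, rfl⟩
    obtain ⟨h₁₂, h₁₃, h₂₃⟩ := le_add_of_inIk ht
    refine ⟨⟨?_, ?_⟩, ?_⟩
    · exact Ideal.mul_mem_right _ _ (Ideal.pow_mul_pow_mem_span_pair_pow h₁₂)
    · rw [tripleMonomial, mul_right_comm]
      exact Ideal.mul_mem_right _ _ (Ideal.pow_mul_pow_mem_span_pair_pow h₁₃)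
    · rw [tripleMonomial, mul_assoc]
      exact Ideal.mul_mem_left _ _ (Ideal.pow_mul_pow_mem_span_pair_pow h₂₃)

end TripleMonomial

section Translate

variable {σ R : Type*} [CommRing R]

noncomputable def translateBy (p : σ → R) : MvPolynomial σ R ≃ₐ[R] MvPolynomial σ R :=
  AlgEquiv.ofAlgHom (aeval fun i => X i + C (p i)) (aeval fun i => X i - C (p i))
    (by ext; simp) (by ext; simp)

@[simp]
lemma translateBy_X (p : σ → R) (i : σ) : translateBy p (X i) = X i + C (p i) := by
  simp [translateBy]

@[simp]
lemma translateBy_C (p : σ → R) (r : R) : translateBy p (C r) = C r := by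
  simp [translateBy]

lemma eval_zero_translateBy (p : σ → R) (f : MvPolynomial σ R) :
    eval 0 (translateBy p f) = eval p f := by
  induction f using MvPolynomial.induction_on with
  | C r => simp only [translateBy_C, eval_C]
  | add f g hf hg => simp only [map_add, hf, hg]
  | mul_X f i hf =>
    simp only [map_mul, hf, translateBy_X, map_add, eval_X, eval_C, Pi.zero_apply, zero_add]

lemma pderiv_translateBy [DecidableEq σ] (p : σ → R) (i : σ) (f : MvPolynomial σ R) :
    pderiv i (translateBy p f) = translateBy p (pderiv i f) := by
  induction f using MvPolynomial.induction_on with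
  | C r => simp
  | add f g hf hg => simp [hf, hg]
  | mul_X f j hf =>
    rcases eq_or_ne i j with rfl | h
    · simp [hf]
    · simp [hf, pderiv_X, h]

lemma coeff_iterate_pderiv [DecidableEq σ] (i : σ) (n : ℕ) (d : σ →₀ ℕ)
    (f : MvPolynomial σ R) :
    coeff d ((pderiv i)^[n] f) = coeff (d + Finsupp.single i n) f * (d i + n).descFactorial n := by
  induction n generalizing f with
  | zero => simp
  | succ n ih =>
    rw [Function.iterate_succ_apply, ih, coeff_pderiv, add_assoc, ← Finsupp.single_add,
      ← add_assoc (d i), Nat.succ_descFactorial_succ]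
    simp only [Finsupp.add_apply, Finsupp.single_eq_same, Nat.cast_mul, Nat.cast_add, Nat.cast_one]
    ring

end Translate

lemma Dnm_apply (n m : ℕ) (f : MvPolynomial (Fin 2) ℝ) :
    Dnm n m f = (pderiv 0)^[n] ((pderiv 1)^[m] f) := by
  simp [Dnm, Module.End.pow_apply]

lemma Dnm_translateBy (p : Fin 2 → ℝ) (n m : ℕ) (f : MvPolynomial (Fin 2) ℝ) :
    Dnm n m (translateBy p f) = translateBy p (Dnm n m f) := by
  have h : ∀ i : Fin 2, Function.Commute (pderiv i) (translateBy p) := pderiv_translateBy p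
  rw [Dnm_apply, Dnm_apply, (h 1).iterate_left m f, (h 0).iterate_left n]

lemma eval_zero_Dnm (n m : ℕ) (f : MvPolynomial (Fin 2) ℝ) :
    eval 0 (Dnm n m f) =
      coeff (Finsupp.single 0 n + Finsupp.single 1 m) f * m.factorial * n.factorial := by
  rw [Dnm_apply, eval_zero, constantCoeff_eq, coeff_iterate_pderiv, coeff_iterate_pderiv]
  simp [mul_assoc, Nat.descFactorial_self]

lemma forall_eval_zero_Dnm_eq_zero_iff (k : ℕ) (f : MvPolynomial (Fin 2) ℝ) :
    (∀ n m : ℕ, n + m < k → eval 0 (Dnm n m f) = 0) ↔ f ∈ idealOfVars (Fin 2) ℝ ^ k := by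
  rw [mem_pow_idealOfVars_iff']
  refine ⟨fun h d hd => ?_, fun h n m hnm => ?_⟩
  · have hd' : d = Finsupp.single 0 (d 0) + Finsupp.single 1 (d 1) := by
      ext i; fin_cases i <;> simp
    have := h (d 0) (d 1) (by simpa [Finsupp.degree_eq_sum] using hd)
    rw [eval_zero_Dnm, ← hd'] at this
    simpa [Nat.factorial_ne_zero] using this
  · rw [eval_zero_Dnm, h _ (by simpa [Finsupp.degree_eq_sum] using hnm)]; simp

noncomputable def pointIdeal (p : Fin 2 → ℝ) : Ideal (MvPolynomial (Fin 2) ℝ) :=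
  Ideal.span {X 0 - C (p 0), X 1 - C (p 1)}

lemma forall_eval_Dnm_eq_zero_iff (k : ℕ) (p : Fin 2 → ℝ) (f : MvPolynomial (Fin 2) ℝ) :
    (∀ n m : ℕ, n + m < k → eval p (Dnm n m f) = 0) ↔ f ∈ pointIdeal p ^ k := by
  have hmap : (pointIdeal p).map (translateBy p) = idealOfVars (Fin 2) ℝ := by
    simp only [pointIdeal, Ideal.map_span, Set.image_insert_eq, Set.image_singleton, map_sub,
      translateBy_X, translateBy_C, add_sub_cancel_right, idealOfVars]
    congr 1
    ext
    simp [Fin.exists_fin_two, eq_comm]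
  simp_rw [← eval_zero_translateBy p, ← Dnm_translateBy, forall_eval_zero_Dnm_eq_zero_iff, ← hmap,
    ← Ideal.map_pow]
  exact Ideal.apply_mem_of_equiv_iff (f := (translateBy p).toRingEquiv)

lemma Bs_eq_tripleMonomial (α β γ : ℕ) :
    Bs α β γ = tripleMonomial (Bs 1 0 0) (Bs 0 1 0) (Bs 0 0 1) (α, β, γ) := by
  simp [Bs, tripleMonomial]

lemma eval_one_Bs (α β γ : ℕ) : eval (fun _ => (1 : ℝ)) (Bs α β γ) = 1 := by
  norm_num [Bs]

lemma C_half_mul_two {σ : Type*} : (C (1 / 2 : ℝ) : MvPolynomial σ ℝ) * 2 = 1 := by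
  rw [← map_ofNat C 2, ← C_mul, ← C_1]
  norm_num

lemma isCoprime_span_Bs_uv_uw :
    IsCoprime (Ideal.span {Bs 1 0 0, Bs 0 1 0}) (Ideal.span {Bs 1 0 0, Bs 0 0 1}) := by
  rw [Ideal.isCoprime_iff_exists]
  refine ⟨_, Ideal.mem_span_pair.2 ⟨1, -X 0, rfl⟩, Bs 0 0 1, Ideal.subset_span (by simp), ?_⟩
  simp only [Bs]
  linear_combination C_half_mul_two

lemma isCoprime_span_Bs_uv_vw :
    IsCoprime (Ideal.span {Bs 1 0 0, Bs 0 1 0}) (Ideal.span {Bs 0 1 0, Bs 0 0 1}) := by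
  rw [Ideal.isCoprime_iff_exists]
  refine ⟨_, Ideal.mem_span_pair.2 ⟨-X 1, 1, rfl⟩, Bs 0 0 1, Ideal.subset_span (by simp), ?_⟩
  simp only [Bs]
  linear_combination C_half_mul_two

lemma isCoprime_span_Bs_uw_vw :
    IsCoprime (Ideal.span {Bs 1 0 0, Bs 0 0 1}) (Ideal.span {Bs 0 1 0, Bs 0 0 1}) := by
  rw [Ideal.isCoprime_iff_exists]
  refine ⟨_, Ideal.mem_span_pair.2 ⟨1, 1, rfl⟩, _, Ideal.mem_span_pair.2 ⟨-X 0, 0, rfl⟩, ?_⟩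
  simp only [Bs]
  linear_combination C_half_mul_two

lemma pointIdeal_neg_one_neg_one : pointIdeal ![-1, -1] = Ideal.span {Bs 1 0 0, Bs 0 1 0} := by
  simp only [pointIdeal, Bs, Matrix.cons_val_zero, Matrix.cons_val_one, map_neg, map_one]
  apply Ideal.span_pair_eq_span_pair <;> rw [Ideal.mem_span_pair]
  · exact ⟨2, 0, by linear_combination (1 + X 0) * C_half_mul_two⟩
  · exact ⟨0, 2, by linear_combination (1 + X 1) * C_half_mul_two⟩
  · exact ⟨C (1 / 2), 0, by ring⟩
  · exact ⟨0, C (1 / 2), by ring⟩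

lemma pointIdeal_neg_one_one : pointIdeal ![-1, 1] = Ideal.span {Bs 1 0 0, Bs 0 0 1} := by
  simp only [pointIdeal, Bs, Matrix.cons_val_zero, Matrix.cons_val_one, map_neg, map_one]
  apply Ideal.span_pair_eq_span_pair <;> rw [Ideal.mem_span_pair]
  · exact ⟨2, 0, by linear_combination (1 + X 0) * C_half_mul_two⟩
  · exact ⟨2 * X 1, -2, by linear_combination (X 1 - 1) * C_half_mul_two⟩
  · exact ⟨C (1 / 2), 0, by ring⟩
  · exact ⟨C (1 / 2) * X 1, -C (1 / 2), by ring⟩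

lemma pointIdeal_one_neg_one : pointIdeal ![1, -1] = Ideal.span {Bs 0 1 0, Bs 0 0 1} := by
  simp only [pointIdeal, Bs, Matrix.cons_val_zero, Matrix.cons_val_one, map_neg, map_one]
  apply Ideal.span_pair_eq_span_pair <;> rw [Ideal.mem_span_pair]
  · exact ⟨2 * X 0, -2, by linear_combination (X 0 - 1) * C_half_mul_two⟩
  · exact ⟨2, 0, by linear_combination (1 + X 1) * C_half_mul_two⟩
  · exact ⟨0, C (1 / 2), by ring⟩
  · exact ⟨-C (1 / 2), C (1 / 2) * X 0, by ring⟩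

lemma zeroCondition_iff_mem_span_Bs (k : ℕ) (a : MvPolynomial (Fin 2) ℝ) :
    (∀ n m : ℕ, n + m < k →
      ∀ ε ∈ ({![-1, -1], ![-1, 1], ![1, -1]} : Set (Fin 2 → ℝ)), eval ε (Dnm n m a) = 0) ↔
      a ∈ Ideal.span ((fun t => Bs t.1 t.2.1 t.2.2) '' {t | inIk k t}) := by
  have hBs : (fun t : ℕ × ℕ × ℕ => Bs t.1 t.2.1 t.2.2) =
      tripleMonomial (Bs 1 0 0) (Bs 0 1 0) (Bs 0 0 1) :=
    funext fun t => Bs_eq_tripleMonomial t.1 t.2.1 t.2.2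
  rw [hBs, ← inf_span_pair_pow_eq_span_tripleMonomial _ _ _ k isCoprime_span_Bs_uv_uw
    isCoprime_span_Bs_uv_vw isCoprime_span_Bs_uw_vw, ← pointIdeal_neg_one_neg_one,
    ← pointIdeal_neg_one_one, ← pointIdeal_one_neg_one]
  simp only [Ideal.mem_inf, ← forall_eval_Dnm_eq_zero_iff, Set.mem_insert_iff,
    Set.mem_singleton_iff, forall_eq_or_imp, forall_eq, forall_and, and_assoc]

lemma exists_normalized_Bs_repr {S : Finset (ℕ × ℕ × ℕ)} {a : MvPolynomial (Fin 2) ℝ}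
    (h1 : eval (fun _ => (1 : ℝ)) a = 4)
    (ha : a ∈ Ideal.span ((fun t : ℕ × ℕ × ℕ => Bs t.1 t.2.1 t.2.2) '' S)) :
    ∃ c : ℕ × ℕ × ℕ → MvPolynomial (Fin 2) ℝ,
      a = ∑ t ∈ S, c t * 4 * Bs t.1 t.2.1 t.2.2 ∧
      ∑ t ∈ S, eval (fun _ => (1 : ℝ)) (c t) = 1 := by
  obtain ⟨c, hc⟩ := Ideal.mem_span_image_finset_iff.1 (Ideal.mul_mem_left _ (C (1 / 4)) ha)
  have ha' : a = ∑ t ∈ S, c t * 4 * Bs t.1 t.2.1 t.2.2 := by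
    calc a = 4 * (C (1 / 4) * a) := by
          rw [← mul_assoc, ← map_ofNat C 4, ← C_mul]; norm_num
      _ = _ := by
          rw [hc, Finset.mul_sum]
          exact Finset.sum_congr rfl fun t _ => by ring
  refine ⟨c, ha', ?_⟩
  have h4 := congrArg (eval fun _ => (1 : ℝ)) ha'
  simp only [h1, map_sum, map_mul, eval_one_Bs, mul_one, map_ofNat, ← Finset.sum_mul] at h4
  linarith

theorem stmt_13_general (k : ℕ) (a : MvPolynomial (Fin 2) ℝ)
    (h1 : eval (fun _ => (1 : ℝ)) a = 4) :
    (∀ n m : ℕ, n + m < k →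
      ∀ ε ∈ ({![-1, -1], ![-1, 1], ![1, -1]} : Set (Fin 2 → ℝ)),
        eval ε (Dnm n m a) = 0) ↔
    ∃ (S : Finset (ℕ × ℕ × ℕ)) (c : ℕ × ℕ × ℕ → MvPolynomial (Fin 2) ℝ),
      (∀ t, t ∈ S ↔ inIk k t) ∧
      a = ∑ t ∈ S, c t * 4 * Bs t.1 t.2.1 t.2.2 ∧
      (∑ t ∈ S, eval (fun _ => (1 : ℝ)) (c t)) = 1 := by
  rw [zeroCondition_iff_mem_span_Bs]
  constructor
  · intro ha
    obtain ⟨c, hc⟩ := exists_normalized_Bs_repr h1 (by rwa [coe_Ik])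
    exact ⟨Ik k, c, fun _ => mem_Ik, hc⟩
  · rintro ⟨S, c, hS, rfl, -⟩
    exact Ideal.sum_mem _ fun t ht =>
      Ideal.mul_mem_left _ _ (Ideal.subset_span ⟨t, (hS t).1 ht, rfl⟩)

/-- Theorem C (algebraic form): a bivariate polynomial `a` with `a(1,1) = 4` satisfies the
zero condition of order `k` iff `a = Σ c_{α,β,γ} · 4 · B#_{α,β,γ}`, summed over the box
spline symbols in `I_k`, with `Σ c_{α,β,γ}(1,1) = 1`. -/
theorem stmt_13 (k : ℕ) (hk : 1 ≤ k) (a : MvPolynomial (Fin 2) ℝ)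
    (h1 : eval (fun _ => (1 : ℝ)) a = 4) :
    (∀ n m : ℕ, n + m < k →
      ∀ ε ∈ ({![-1, -1], ![-1, 1], ![1, -1]} : Set (Fin 2 → ℝ)),
        eval ε (Dnm n m a) = 0) ↔
    ∃ (S : Finset (ℕ × ℕ × ℕ)) (c : ℕ × ℕ × ℕ → MvPolynomial (Fin 2) ℝ),
      (∀ t, t ∈ S ↔ inIk k t) ∧
      a = ∑ t ∈ S, c t * 4 * Bs t.1 t.2.1 t.2.2 ∧
      (∑ t ∈ S, eval (fun _ => (1 : ℝ)) (c t)) = 1 :=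
  stmt_13_general k a h1
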